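/- Let a, b ∈ ℝ^n and let A be an m × n real matrix. Then the following are equivalent: (1) there is no vector z ∈ ℝ^n with A z = 0, aᵀz > 0, and bᵀz > 0; (2) there exist λ ∈ [0,1] and γ ∈ ℝ^m such that λ a + (1−λ) b + Aᵀ γ = 0. -/

import Mathlib

open Matrix

private lemma dot_self_nonneg {n : ℕ} (u : Fin n → ℝ) : 0 ≤ u ⬝ᵥ u :=
  Finset.sum_nonneg fun i _ => mul_self_nonneg _

private lemma dot_self_pos {n : ℕ} {u : Fin n → ℝ} (hu : u ≠ 0) : 0 < u ⬝ᵥ u :=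
  lt_of_le_of_ne (dot_self_nonneg u) fun h => hu (dotProduct_self_eq_zero.mp h.symm)

/-- Core 2-vector lemma: if no combination `c•u+d•v` has positive dot product with both
`u` and `v`, then some convex combination of `u` and `v` vanishes. -/
private lemma core {n : ℕ} (u v : Fin n → ℝ)
    (h : ∀ c d : ℝ, ¬ (0 < u ⬝ᵥ (c • u + d • v) ∧ 0 < v ⬝ᵥ (c • u + d • v))) :
    ∃ l, l ∈ Set.Icc (0:ℝ) 1 ∧ l • u + (1 - l) • v = 0 := by
  by_cases hu : u = 0
  · exact ⟨1, ⟨zero_le_one, le_refl 1⟩, by simp [hu]⟩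
  by_cases hv : v = 0
  · exact ⟨0, ⟨le_refl 0, zero_le_one⟩, by simp [hv]⟩
  have huu : 0 < u ⬝ᵥ u := dot_self_pos hu
  have hvv : 0 < v ⬝ᵥ v := dot_self_pos hv
  have hcomm : v ⬝ᵥ u = u ⬝ᵥ v := dotProduct_comm v u
  have huv : u ⬝ᵥ v ≤ 0 := by
    by_contra hpos
    push_neg at hpos
    refine h 1 0 ?_
    constructor
    · simpa using huu
    · simpa [hcomm] using hpos
  set α := u ⬝ᵥ u with hα
  set β := v ⬝ᵥ v with hβ
  set g := u ⬝ᵥ v with hg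
  -- Cauchy–Schwarz via the expansion of ‖α•v − g•u‖²
  have hw : (α • v + (-g) • u) ⬝ᵥ (α • v + (-g) • u) = α * (α * β - g * g) := by
    simp only [dotProduct_add, add_dotProduct, smul_dotProduct, dotProduct_smul,
      smul_eq_mul, hcomm]
    ring
  have hCS : 0 ≤ α * β - g * g := by
    have h0 := dot_self_nonneg (α • v + (-g) • u)
    rw [hw] at h0
    nlinarith
  rcases hCS.lt_or_eq with hD | hD
  · -- independent case: build an explicit improving direction, contradiction
    exfalso
    set D := α * β - g * g with hDdef
    have hg1 : (0:ℝ) < 1 - g := by linarith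
    set ε := D / (2 * (1 - g)) with hε
    have hεpos : 0 < ε := by positivity
    have hεeq : ε * (1 - g) = D / 2 := by
      have h2 : ε * (2 * (1 - g)) = D := by
        rw [hε]; exact div_mul_cancel₀ D (ne_of_gt (by linarith))
      linarith
    have hεg : ε * (-g) ≤ D / 2 := by nlinarith
    refine h β (ε - g) ⟨?_, ?_⟩
    · have : u ⬝ᵥ (β • u + (ε - g) • v) = β * α + (ε - g) * g := by
        simp [dotProduct_add, dotProduct_smul, smul_eq_mul]
        rfl
      rw [this]
      nlinarith
    · have : v ⬝ᵥ (β • u + (ε - g) • v) = β * g + (ε - g) * β := by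
        simp [dotProduct_add, dotProduct_smul, smul_eq_mul, hcomm]
        exact Or.inl rfl
      rw [this]
      nlinarith
  · -- dependence: v = t • u with t < 0
    have hw0 : (α • v + (-g) • u) = 0 := by
      apply dotProduct_self_eq_zero.mp
      rw [hw, ← hD]
      ring
    have hαv : α • v = g • u := by
      have h3 : α • v = -((-g) • u) := by
        rw [eq_neg_iff_add_eq_zero]
        exact hw0
      rw [h3, neg_smul, neg_neg]
    have hvt : v = (α⁻¹ * g) • u := by
      have h4 := congrArg (fun x => α⁻¹ • x) hαv
      simpa [smul_smul, inv_mul_cancel₀ (ne_of_gt huu)] using h4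
    set t := α⁻¹ * g with ht
    have ht0 : t ≤ 0 := by
      have hi : (0:ℝ) < α⁻¹ := inv_pos.mpr huu
      rw [ht]
      nlinarith
    have htlt : t < 0 := lt_of_le_of_ne ht0 (fun h0 => hv (by rw [hvt, h0, zero_smul]))
    have h1t : (0:ℝ) < 1 - t := by linarith
    refine ⟨-t / (1 - t), ⟨?_, ?_⟩, ?_⟩
    · exact div_nonneg (by linarith) h1t.le
    · rw [div_le_one h1t]
      linarith
    · have hcoef : (-t / (1 - t)) + (1 - (-t / (1 - t))) * t = 0 := by
        field_simp
        ring
      rw [hvt, smul_smul, ← add_smul, hcoef, zero_smul]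

private lemma inner_eq_dot {n : ℕ} (x y : EuclideanSpace ℝ (Fin n)) :
    @inner ℝ (EuclideanSpace ℝ (Fin n)) _ x y = x.ofLp ⬝ᵥ y.ofLp := by
  simp [PiLp.inner_apply, RCLike.inner_apply, dotProduct, mul_comm]

private lemma transpose_dot {n m : ℕ} (A : Matrix (Fin m) (Fin n) ℝ)
    (γ : Fin m → ℝ) (z : Fin n → ℝ) :
    (A.transpose.mulVec γ) ⬝ᵥ z = γ ⬝ᵥ (A.mulVec z) := by
  rw [Matrix.mulVec_transpose, ← Matrix.dotProduct_mulVec]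

/-- Linear-algebraic duality: there is no `z` with `Az = 0`, `aᵀz > 0` and `bᵀz > 0`
iff some convex combination of `a` and `b` lies in the row space of `A`
(i.e. `λ a + (1-λ) b + Aᵀ γ = 0` for some `λ ∈ [0,1]`, `γ`). -/
theorem no_improving_direction_iff_dual {n m : ℕ}
    (a b : Fin n → ℝ) (A : Matrix (Fin m) (Fin n) ℝ) :
    (¬ ∃ z : Fin n → ℝ, A.mulVec z = 0 ∧ 0 < a ⬝ᵥ z ∧ 0 < b ⬝ᵥ z) ↔
    (∃ l : ℝ, l ∈ Set.Icc (0 : ℝ) 1 ∧ ∃ γ : Fin m → ℝ,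
      l • a + (1 - l) • b + A.transpose.mulVec γ = 0) := by
  have innerdot : ∀ x y : Fin n → ℝ,
      @inner ℝ (EuclideanSpace ℝ (Fin n)) _ (WithLp.toLp 2 x) (WithLp.toLp 2 y) = x ⬝ᵥ y := by
    intro x y
    simp [PiLp.inner_apply, RCLike.inner_apply, dotProduct, mul_comm]
  constructor
  · intro h
    -- S = row space of A, as a submodule of Euclidean space
    set S : Submodule ℝ (EuclideanSpace ℝ (Fin n)) := LinearMap.range
      ((WithLp.linearEquiv 2 ℝ (Fin n → ℝ)).symm.toLinearMap ∘ₗ Aᵀ.mulVecLin) with hS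
    -- orthogonal complement of S is the kernel of A
    have hSorth : ∀ w : EuclideanSpace ℝ (Fin n), w ∈ Sᗮ → A.mulVec w.ofLp = 0 := by
      intro w hw
      rw [Submodule.mem_orthogonal] at hw
      have h1 := hw (WithLp.toLp 2 (Aᵀ.mulVec (A.mulVec w.ofLp))) ⟨A.mulVec w.ofLp, rfl⟩
      rw [inner_eq_dot] at h1
      apply dotProduct_self_eq_zero.mp
      rw [Matrix.dotProduct_mulVec]
      simpa [Matrix.mulVecLin_apply, Matrix.mulVec_transpose, -Matrix.mulVec_mulVec] using h1
    -- members of S are orthogonal (w.r.t. dot product) to ker A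
    have hSdot : ∀ x, x ∈ S → ∀ z : Fin n → ℝ, A.mulVec z = 0 → x.ofLp ⬝ᵥ z = 0 := by
      rintro x ⟨δ, rfl⟩ z hz
      show (Aᵀ.mulVec δ) ⬝ᵥ z = 0
      rw [transpose_dot, hz, dotProduct_zero]
    obtain ⟨pa, hpa, u, hu, hau⟩ := S.exists_add_mem_mem_orthogonal (WithLp.toLp 2 a)
    obtain ⟨pb, hpb, v, hv, hbv⟩ := S.exists_add_mem_mem_orthogonal (WithLp.toLp 2 b)
    have hau' : a = pa.ofLp + u.ofLp := by simpa using congrArg WithLp.ofLp hau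
    have hbv' : b = pb.ofLp + v.ofLp := by simpa using congrArg WithLp.ofLp hbv
    -- apply the core lemma to u, v
    obtain ⟨l, hl, hluv⟩ := core u.ofLp v.ofLp (by
      intro c d ⟨hc1, hc2⟩
      have hz : A.mulVec (c • u.ofLp + d • v.ofLp) = 0 := by
        have hmem : (c • u + d • v : EuclideanSpace ℝ (Fin n)) ∈ Sᗮ :=
          Sᗮ.add_mem (Sᗮ.smul_mem c hu) (Sᗮ.smul_mem d hv)
        simpa using hSorth _ hmem
      have hua : A.mulVec u.ofLp = 0 := hSorth u hu
      have hva : A.mulVec v.ofLp = 0 := hSorth v hv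
      have ha' : a ⬝ᵥ (c • u.ofLp + d • v.ofLp) = u.ofLp ⬝ᵥ (c • u.ofLp + d • v.ofLp) := by
        rw [hau', add_dotProduct, hSdot pa hpa _ hz, zero_add]
      have hb' : b ⬝ᵥ (c • u.ofLp + d • v.ofLp) = v.ofLp ⬝ᵥ (c • u.ofLp + d • v.ofLp) := by
        rw [hbv', add_dotProduct, hSdot pb hpb _ hz, zero_add]
      exact h ⟨c • u.ofLp + d • v.ofLp, hz, by rw [ha']; exact hc1, by rw [hb']; exact hc2⟩)
    refine ⟨l, hl, ?_⟩
    -- l•a + (1-l)•b = l•pa + (1-l)•pb ∈ S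
    have hmem : WithLp.toLp 2 (l • a + (1 - l) • b) ∈ S := by
      have : (l • a + (1 - l) • b : Fin n → ℝ) = l • pa.ofLp + (1 - l) • pb.ofLp := by
        rw [hau', hbv']
        have := hluv
        have expand : l • (pa.ofLp + u.ofLp) + (1 - l) • (pb.ofLp + v.ofLp)
            = (l • pa.ofLp + (1 - l) • pb.ofLp) + (l • u.ofLp + (1 - l) • v.ofLp) := by
          module
        rw [expand, hluv, add_zero]
      rw [this]
      simpa using S.add_mem (S.smul_mem l hpa) (S.smul_mem (1 - l) hpb)
    obtain ⟨δ, hδ⟩ := hmem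
    refine ⟨-δ, ?_⟩
    have hδ' : Aᵀ.mulVec δ = l • a + (1 - l) • b := congrArg WithLp.ofLp hδ
    rw [Matrix.mulVec_neg, hδ']
    abel
  · rintro ⟨l, ⟨hl0, hl1⟩, γ, hγ⟩ ⟨z, hz, ha, hb⟩
    have h0 : (l • a + (1 - l) • b + Aᵀ.mulVec γ) ⬝ᵥ z = 0 := by
      rw [hγ, zero_dotProduct]
    rw [add_dotProduct, add_dotProduct, smul_dotProduct, smul_dotProduct,
      transpose_dot, hz, dotProduct_zero, add_zero, smul_eq_mul, smul_eq_mul] at h0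
    have h1 : 0 ≤ l * (a ⬝ᵥ z) := mul_nonneg hl0 ha.le
    have h2 : 0 ≤ (1 - l) * (b ⬝ᵥ z) := mul_nonneg (by linarith) hb.le
    have h3 : l * (a ⬝ᵥ z) = 0 := by linarith
    have h4 : (1 - l) * (b ⬝ᵥ z) = 0 := by linarith
    rcases mul_eq_zero.mp h3 with hc | hc
    · rcases mul_eq_zero.mp h4 with hd | hd
      · linarith
      · linarith
    · linarith
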